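/- arXiv:1904.05522 — 2 statements merged into one kernel-verified Lean document; each statement's English description precedes it below -/
import Mathlib

section
/- Let 0 < μ_b ≤ μ_g be the bad-state and good-state computing speeds, d > 0 a deadline, r ∈ ℕ the per-worker storage, and suppose ℓ_b := μ_b·d is a natural number with ℓ_b ≤ r, and set ℓ_g := min(⌊μ_g·d⌋, r). Let ℓ = (ℓ_1,…,ℓ_n) be any load vector with 0 ≤ ℓ_i ≤ r for all i, and define the rounded load vector ℓ′ by ℓ′_i = ℓ_b if ℓ_i ≤ ℓ_b and ℓ′_i = ℓ_g otherwise. Then for every speed vector μ = (μ_1,…,μ_n) with each μ_i ∈ {μ_b, μ_g} and every threshold K: if Σ_{i=1}^n ℓ_i·1{ℓ_i ≤ μ_i·d} ≥ K, then Σ_{i=1}^n ℓ′_i·1{ℓ′_i ≤ μ_i·d} ≥ K. -/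
/-! A worker's returned load can only grow under the rounding. If the original load `ℓ` is
returned and `ℓ ≤ ℓ_b`, the rounded load `ℓ_b = μ_b d` is larger and still fits. If `ℓ > ℓ_b`
is returned, the worker must be in the good state, and then `ℓ ≤ ⌊μ_g d⌋` and `ℓ ≤ r` give
`ℓ ≤ ℓ_g`, which fits as well. Summing over workers gives the claim. -/

noncomputable def returnedLoad (ℓ : ℕ) (c : ℝ) : ℕ := if (ℓ : ℝ) ≤ c then ℓ else 0

lemma returnedLoad_le_returnedLoad {ℓ ℓ' : ℕ} {c : ℝ}
    (h : (ℓ : ℝ) ≤ c → ℓ ≤ ℓ' ∧ (ℓ' : ℝ) ≤ c) :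
    returnedLoad ℓ c ≤ returnedLoad ℓ' c := by
  unfold returnedLoad
  by_cases hℓ : (ℓ : ℝ) ≤ c
  · obtain ⟨hle, hℓ'⟩ := h hℓ
    simp only [hℓ, hℓ', if_true, hle]
  · simp only [hℓ, if_false, Nat.zero_le]

lemma returnedLoad_le_returnedLoad_round {μb μg μ d : ℝ} (hμbg : μb ≤ μg) (hd : 0 < d)
    {r ℓb ℓ : ℕ} (hℓb : (ℓb : ℝ) = μb * d) (hℓr : ℓ ≤ r) (hμ : μ = μb ∨ μ = μg) :
    returnedLoad ℓ (μ * d) ≤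
      returnedLoad (if ℓ ≤ ℓb then ℓb else min ⌊μg * d⌋₊ r) (μ * d) := by
  refine returnedLoad_le_returnedLoad fun hℓμ => ?_
  split_ifs with hℓℓb
  · refine ⟨hℓℓb, ?_⟩
    rw [hℓb]
    rcases hμ with rfl | rfl
    · rfl
    · gcongr
  · have hμg : μ = μg := by
      refine hμ.resolve_left fun hμb => hℓℓb ?_
      exact_mod_cast hℓμ.trans (hμb ▸ hℓb.ge)
    subst hμg
    have hfloor : (⌊μ * d⌋₊ : ℝ) ≤ μ * d := Nat.floor_le ((Nat.cast_nonneg ℓ).trans hℓμ)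
    refine ⟨le_min (Nat.le_floor hℓμ) hℓr, ?_⟩
    exact (Nat.cast_le.mpr (min_le_left _ _)).trans hfloor

theorem stmt_1_general (n : ℕ) (μb μg d : ℝ) (hμbg : μb ≤ μg) (hd : 0 < d)
    (r ℓb ℓg : ℕ) (hℓb : (ℓb : ℝ) = μb * d)
    (hℓg : ℓg = min ⌊μg * d⌋₊ r)
    (ℓ : Fin n → ℕ) (hℓr : ∀ i, ℓ i ≤ r)
    (ℓ' : Fin n → ℕ) (hℓ' : ∀ i, ℓ' i = if ℓ i ≤ ℓb then ℓb else ℓg)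
    (μ : Fin n → ℝ) (hμ : ∀ i, μ i = μb ∨ μ i = μg)
    (K : ℕ)
    (h : K ≤ ∑ i, if (ℓ i : ℝ) ≤ μ i * d then ℓ i else 0) :
    K ≤ ∑ i, if (ℓ' i : ℝ) ≤ μ i * d then ℓ' i else 0 := by
  refine h.trans (Finset.sum_le_sum fun i _ => ?_)
  rw [hℓ' i, hℓg]
  exact returnedLoad_le_returnedLoad_round hμbg hd hℓb (hℓr i) (hμ i)

/-- Rounding a load vector to the two values `ℓ_b` and `ℓ_g` can only increase the
number of returned computations by the deadline, for every realization of the speeds. -/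
theorem stmt_1 (n : ℕ) (μb μg d : ℝ) (hμb : 0 < μb) (hμbg : μb ≤ μg) (hd : 0 < d)
    (r ℓb ℓg : ℕ) (hℓb : (ℓb : ℝ) = μb * d) (hbr : ℓb ≤ r)
    (hℓg : ℓg = min ⌊μg * d⌋₊ r)
    (ℓ : Fin n → ℕ) (hℓr : ∀ i, ℓ i ≤ r)
    (ℓ' : Fin n → ℕ) (hℓ' : ∀ i, ℓ' i = if ℓ i ≤ ℓb then ℓb else ℓg)
    (μ : Fin n → ℝ) (hμ : ∀ i, μ i = μb ∨ μ i = μg)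
    (K : ℕ)
    (h : K ≤ ∑ i, if (ℓ i : ℝ) ≤ μ i * d then ℓ i else 0) :
    K ≤ ∑ i, if (ℓ' i : ℝ) ≤ μ i * d then ℓ' i else 0 :=
  stmt_1_general n μb μg d hμbg hd r ℓb ℓg hℓb hℓg ℓ hℓr ℓ' hℓ' μ hμ K h
end

section
/- Lagrange coded computing decodability (univariate case): let F be a field, let β_1,…,β_k ∈ F be distinct, let X_1,…,X_k ∈ F, and let u ∈ F[z] be the Lagrange interpolation polynomial of degree at most k − 1 with u(β_j) = X_j for all j. Let f ∈ F[z] be a polynomial of degree at most D, and set K* = (k − 1)·D + 1. Then deg(f ∘ u) ≤ (k − 1)·D, and for any K* distinct points α_1,…,α_{K*} ∈ F, any polynomial h ∈ F[z] with deg h ≤ (k − 1)·D satisfying h(α_v) = f(u(α_v)) for all v = 1,…,K* must satisfy h(β_j) = f(X_j) for every j = 1,…,k. In other words, the K* evaluations f(u(α_1)),…,f(u(α_{K*})) uniquely determine all the desired evaluations f(X_1),…,f(X_k). -/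
open Polynomial

/-
Both `h` and `f ∘ u` have degree at most `(k - 1) * D` and agree at the `(k - 1) * D + 1`
distinct points `α v`, so they are equal; evaluating `f ∘ u` at `β j` gives `f (X j)`.
-/

theorem Polynomial.degree_comp_le_of_degree_le {R : Type*} [Semiring R] {p q : R[X]} {m n : ℕ}
    (hp : p.degree ≤ m) (hq : q.degree ≤ n) : (p.comp q).degree ≤ (n * m : ℕ) := by
  refine degree_le_of_natDegree_le (natDegree_comp_le.trans ?_)
  rw [Nat.mul_comm n]
  exact Nat.mul_le_mul (natDegree_le_of_degree_le hp) (natDegree_le_of_degree_le hq)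

theorem Polynomial.eq_of_degree_lt_card_of_eval_eq {R ι : Type*} [CommRing R] [IsDomain R]
    [Fintype ι] {p q : R[X]} {v : ι → R} (hv : Function.Injective v)
    (hp : p.degree < Fintype.card ι) (hq : q.degree < Fintype.card ι)
    (hpq : ∀ i, p.eval (v i) = q.eval (v i)) : p = q :=
  eq_of_degrees_lt_of_eval_index_eq Finset.univ hv.injOn hp hq fun i _ => hpq i

theorem stmt_14_general {F : Type*} [Field F] (k D : ℕ)
    (β : Fin k → F) (X : Fin k → F)
    (u : Polynomial F) (hu : u.degree ≤ (k - 1 : ℕ))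
    (huβ : ∀ j, u.eval (β j) = X j)
    (f : Polynomial F) (hf : f.degree ≤ (D : ℕ))
    (α : Fin ((k - 1) * D + 1) → F) (hα : Function.Injective α)
    (h : Polynomial F) (hh : h.degree ≤ ((k - 1) * D : ℕ))
    (hhα : ∀ v, h.eval (α v) = f.eval (u.eval (α v))) :
    (f.comp u).degree ≤ ((k - 1) * D : ℕ) ∧ ∀ j, h.eval (β j) = f.eval (X j) := by
  have hcomp := degree_comp_le_of_degree_le hf hu
  refine ⟨hcomp, fun j => ?_⟩
  have hlt {p : F[X]} (hp : p.degree ≤ ((k - 1) * D : ℕ)) :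
      p.degree < Fintype.card (Fin ((k - 1) * D + 1)) := by
    rw [Fintype.card_fin]
    exact hp.trans_lt (by exact_mod_cast Nat.lt_succ_self _)
  have h_eq : h = f.comp u :=
    eq_of_degree_lt_card_of_eval_eq hα (hlt hh) (hlt hcomp) fun v => by rw [hhα, eval_comp]
  rw [h_eq, eval_comp, huβ]

/-- Lagrange coded computing decodability (univariate case): if `u` interpolates the data
`X_j` at distinct points `β_j` with `deg u ≤ k - 1` and `deg f ≤ D`, then
`deg (f ∘ u) ≤ (k-1)D`, and any polynomial `h` of degree at most `(k-1)D` agreeing with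
`f ∘ u` at `K* = (k-1)D + 1` distinct points `α_v` satisfies `h(β_j) = f(X_j)` for all `j`:
the `K*` evaluations determine all desired evaluations. -/
theorem stmt_14 {F : Type*} [Field F] (k D : ℕ) (hk : 0 < k)
    (β : Fin k → F) (hβ : Function.Injective β) (X : Fin k → F)
    (u : Polynomial F) (hu : u.degree ≤ (k - 1 : ℕ))
    (huβ : ∀ j, u.eval (β j) = X j)
    (f : Polynomial F) (hf : f.degree ≤ (D : ℕ))
    (α : Fin ((k - 1) * D + 1) → F) (hα : Function.Injective α)
    (h : Polynomial F) (hh : h.degree ≤ ((k - 1) * D : ℕ))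
    (hhα : ∀ v, h.eval (α v) = f.eval (u.eval (α v))) :
    (f.comp u).degree ≤ ((k - 1) * D : ℕ) ∧ ∀ j, h.eval (β j) = f.eval (X j) :=
  stmt_14_general k D β X u hu huβ f hf α hα h hh hhα
end
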